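/- arXiv:1707.07786 — 5 statements merged into one kernel-verified Lean document; each statement's English description precedes it below -/
import Mathlib

section
/- Let (G,X) be a G-system, x ∈ X, and F = (F_n)_{n∈D} a Følner net in G. Then the set C_F(x) = {y ∈ X : d̄_F(N(x,U)) > 0 for every open neighborhood U of y} is a closed F-center of attraction of x, and every closed F-center of attraction of x contains C_F(x). Consequently C_F(x) is the unique minimal (under inclusion) closed F-center of attraction of x; in particular a minimal F-center of attraction of x relative to F always exists. -/
open Filter Metric Set


section Defs

variable {G : Type*} [Group G] [DecidableEq G]
variable {D : Type*} [Preorder D]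

/-- `F` is a (left) Følner net in `G`. -/
def IsFolnerNet (F : D → Finset G) : Prop :=
  (∀ n, (F n).Nonempty) ∧
    ∀ g : G,
      Tendsto (fun n : D =>
          ((symmDiff ((F n).image fun h => g * h) (F n)).card : ℝ) / (F n).card)
        atTop (nhds 0)

/-- Upper density of `A ⊆ G` relative to the net `F`. -/
noncomputable def upperDensity (F : D → Finset G) (A : Set G) : ℝ :=
  sSup {α : ℝ | ∀ m : D, ∃ n : D, m ≤ n ∧
    α ≤ (((F n : Set G) ∩ A).ncard : ℝ) / (F n).card}

variable {X : Type*} [MetricSpace X] [MulAction G X]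

/-- The minimal `F`-center of attraction of `x`. -/
def minCenter (F : D → Finset G) (x : X) : Set X :=
  {y : X | ∀ U : Set X, IsOpen U → y ∈ U → 0 < upperDensity F {g : G | g • x ∈ U}}

/-- A closed set `C` is an `F`-center of attraction of `x` if for every `ε > 0` the set
`N(x, B_ε(C))` has `F`-density `1`. -/
def IsCenterOfAttraction (F : D → Finset G) (x : X) (C : Set X) : Prop :=
  IsClosed C ∧ ∀ ε : ℝ, 0 < ε →
    Tendsto (fun n : D =>
        (((F n : Set G) ∩ {g : G | g • x ∈ Metric.thickening ε C}).ncard : ℝ) / (F n).card)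
      atTop (nhds 1)

end Defs

/-! A set `A ⊆ G` has `F`-density zero exactly when `d̄_F(A) ≤ 0`, and such sets are closed
under subsets and finite unions. Every point outside `C_F(x)` has an open neighbourhood `U` with
`N(x, U)` of density zero, so by compactness the same holds for `N(x, K)` whenever `K` is compact
and disjoint from `C_F(x)`; for `K = X \ B_ε(C_F(x))` this says that `C_F(x)` is a center of
attraction. Conversely, if `y ∉ C` for a center of attraction `C`, a small ball around `y` misses
some `B_δ(C)`, whose visits have density one, so the visits to the ball have density zero and
`y ∉ C_F(x)`. -/

section Density

variable {α : Type*} (s : Finset α) {A B : Set α}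

noncomputable def densityIn (s : Finset α) (A : Set α) : ℝ :=
  ((s : Set α) ∩ A).ncard / s.card

theorem densityIn_nonneg (A : Set α) : 0 ≤ densityIn s A := by
  unfold densityIn
  positivity

@[simp]
theorem densityIn_empty : densityIn s ∅ = 0 := by
  simp [densityIn]

theorem densityIn_mono (h : A ⊆ B) : densityIn s A ≤ densityIn s B := by
  unfold densityIn
  gcongr
  exact s.finite_toSet.inter_of_left B

theorem densityIn_union_le (A B : Set α) :
    densityIn s (A ∪ B) ≤ densityIn s A + densityIn s B := by
  unfold densityIn
  rw [← add_div, inter_union_distrib_left]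
  gcongr
  exact_mod_cast ncard_union_le _ _

theorem densityIn_add_densityIn_compl {s : Finset α} (hs : s.Nonempty) (A : Set α) :
    densityIn s A + densityIn s Aᶜ = 1 := by
  have hcard : ((s : Set α) ∩ A).ncard + ((s : Set α) \ A).ncard = s.card := by
    rw [ncard_inter_add_ncard_sdiff_eq_ncard _ _ s.finite_toSet, ncard_coe_finset]
  unfold densityIn
  rw [← add_div, ← sdiff_eq, div_eq_one_iff_eq (by exact_mod_cast hs.card_pos.ne')]
  exact_mod_cast hcard

end Density

section Net

variable {G : Type*} {D : Type*} [Preorder D] {F : D → Finset G} {A B : Set G}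

def HasDensityZero (F : D → Finset G) (A : Set G) : Prop :=
  Tendsto (fun n => densityIn (F n) A) atTop (nhds 0)

theorem hasDensityZero_empty : HasDensityZero F ∅ := by
  simp [HasDensityZero, tendsto_const_nhds]

theorem HasDensityZero.mono (hB : HasDensityZero F B) (h : A ⊆ B) : HasDensityZero F A :=
  squeeze_zero (fun _ => densityIn_nonneg _ _) (fun _ => densityIn_mono _ h) hB

theorem HasDensityZero.union (hA : HasDensityZero F A) (hB : HasDensityZero F B) :
    HasDensityZero F (A ∪ B) :=
  squeeze_zero (fun _ => densityIn_nonneg _ _) (fun _ => densityIn_union_le _ A B)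
    (by simpa using hA.add hB)

theorem hasDensityZero_compl_iff (hF : ∀ n, (F n).Nonempty) :
    HasDensityZero F Aᶜ ↔ Tendsto (fun n => densityIn (F n) A) atTop (nhds 1) := by
  have hsum (n : D) : densityIn (F n) Aᶜ = 1 - densityIn (F n) A := by
    linarith [densityIn_add_densityIn_compl (hF n) A]
  simp only [HasDensityZero, hsum]
  exact ⟨fun h => by simpa using h.const_sub 1, fun h => by simpa using h.const_sub 1⟩

theorem upperDensity_nonpos_iff [Group G] [IsDirected D (· ≤ ·)] [Nonempty D]
    (hF : ∀ n, (F n).Nonempty) : upperDensity F A ≤ 0 ↔ HasDensityZero F A := by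
  have hset : {a : ℝ | ∀ m, ∃ n, m ≤ n ∧ a ≤ (((F n : Set G) ∩ A).ncard : ℝ) / (F n).card} =
      {a : ℝ | ∃ᶠ n in atTop, a ≤ densityIn (F n) A} := by
    ext a
    exact frequently_atTop.symm
  have hzero : (0 : ℝ) ∈ {a : ℝ | ∃ᶠ n in atTop, a ≤ densityIn (F n) A} :=
    Eventually.frequently (.of_forall fun n => densityIn_nonneg _ _)
  have hbdd : BddAbove {a : ℝ | ∃ᶠ n in atTop, a ≤ densityIn (F n) A} := by
    refine ⟨1, fun a ha => ?_⟩
    obtain ⟨n, hn⟩ := ha.exists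
    linarith [densityIn_add_densityIn_compl (hF n) A, densityIn_nonneg (F n) Aᶜ]
  rw [upperDensity, hset]
  constructor
  · intro hsup
    refine tendsto_order.2 ⟨fun a ha => .of_forall fun n => ha.trans_le (densityIn_nonneg _ _),
      fun a ha => ?_⟩
    by_contra hlt
    exact ha.not_ge ((le_csSup hbdd (not_eventually.1 hlt |>.mono fun n => le_of_not_gt)).trans
      hsup)
  · intro h
    refine csSup_le ⟨0, hzero⟩ fun a ha => ?_
    by_contra! hpos
    obtain ⟨n, hle, hlt⟩ := (ha.and_eventually (h.eventually (gt_mem_nhds hpos))).exists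
    exact hlt.not_ge hle

end Net

section CenterOfAttraction

variable {G : Type*} [Group G] {D : Type*} [Preorder D]
  {X : Type*} [MetricSpace X] [MulAction G X] {F : D → Finset G} {x : X}

theorem notMem_minCenter_iff {y : X} : y ∉ minCenter F x ↔
    ∃ U : Set X, IsOpen U ∧ y ∈ U ∧ upperDensity F {g : G | g • x ∈ U} ≤ 0 := by
  simp [minCenter]

theorem isClosed_minCenter (F : D → Finset G) (x : X) : IsClosed (minCenter F x) := by
  refine isOpen_compl_iff.1 (isOpen_iff_forall_mem_open.2 fun y hy => ?_)
  obtain ⟨U, hUo, hyU, hU⟩ := notMem_minCenter_iff.1 hy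
  exact ⟨U, fun z hzU hz => (hz U hUo hzU).not_ge hU, hUo, hyU⟩

variable [IsDirected D (· ≤ ·)] [Nonempty D]

theorem hasDensityZero_of_isCompact_of_disjoint_minCenter (hF : ∀ n, (F n).Nonempty)
    {K : Set X} (hK : IsCompact K) (hKC : Disjoint K (minCenter F x)) :
    HasDensityZero F {g | g • x ∈ K} := by
  refine hK.induction_on (p := fun S => HasDensityZero F {g | g • x ∈ S})
    hasDensityZero_empty (fun S T hST hT => hT.mono fun g hg => hST hg)
    (fun S T hS hT => hS.union hT) fun y hy => ?_
  obtain ⟨U, hUo, hyU, hU⟩ := notMem_minCenter_iff.1 (hKC.notMem_of_mem_left hy)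
  exact ⟨U, mem_nhdsWithin_of_mem_nhds (hUo.mem_nhds hyU), (upperDensity_nonpos_iff hF).1 hU⟩

theorem isCenterOfAttraction_minCenter [CompactSpace X] (hF : ∀ n, (F n).Nonempty) :
    IsCenterOfAttraction F x (minCenter F x) := by
  refine ⟨isClosed_minCenter F x, fun ε hε => ?_⟩
  have hdisj : Disjoint (thickening ε (minCenter F x))ᶜ (minCenter F x) :=
    disjoint_compl_left.mono_right (self_subset_thickening hε _)
  have hnull : HasDensityZero F {g | g • x ∈ thickening ε (minCenter F x)}ᶜ := by
    simpa only [compl_ofPred, mem_compl_iff] using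
      hasDensityZero_of_isCompact_of_disjoint_minCenter hF
        isOpen_thickening.isClosed_compl.isCompact hdisj
  exact (hasDensityZero_compl_iff hF).1 hnull

theorem minCenter_subset_of_isCenterOfAttraction (hF : ∀ n, (F n).Nonempty) {C : Set X}
    (hC : IsCenterOfAttraction F x C) : minCenter F x ⊆ C := by
  intro y hy
  by_contra hyC
  obtain ⟨δ, hδ, hdisj⟩ :=
    (disjoint_singleton_left.2 hyC).exists_thickenings isCompact_singleton hC.1
  rw [thickening_singleton] at hdisj
  have hball : HasDensityZero F {g | g • x ∈ ball y δ} :=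
    ((hasDensityZero_compl_iff hF).2 (hC.2 δ hδ)).mono fun g hg => hdisj.notMem_of_mem_left hg
  exact (hy _ isOpen_ball (mem_ball_self hδ)).not_ge ((upperDensity_nonpos_iff hF).2 hball)

end CenterOfAttraction

theorem minCenter_isCenterOfAttraction_and_minimal_general
    {G : Type*} [Group G] [DecidableEq G]
    {D : Type*} [Preorder D] [IsDirected D (· ≤ ·)] [Nonempty D]
    {X : Type*} [MetricSpace X] [CompactSpace X] [MulAction G X]
    (Fol : D → Finset G) (hFol : IsFolnerNet Fol) (x : X) :
    IsCenterOfAttraction Fol x (minCenter Fol x) ∧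
    (∀ C : Set X, IsCenterOfAttraction Fol x C → minCenter Fol x ⊆ C) ∧
    (∀ C : Set X, IsCenterOfAttraction Fol x C →
      (∀ C' : Set X, C' ⊆ C → IsCenterOfAttraction Fol x C' → C' = C) →
      C = minCenter Fol x) := by
  have hmin (C : Set X) (hC : IsCenterOfAttraction Fol x C) : minCenter Fol x ⊆ C :=
    minCenter_subset_of_isCenterOfAttraction hFol.1 hC
  refine ⟨isCenterOfAttraction_minCenter hFol.1, hmin, fun C hC hCmin => ?_⟩
  exact (hCmin _ (hmin C hC) (isCenterOfAttraction_minCenter hFol.1)).symm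

/-- Lemma 1.2: `C_F(x)` is a closed `F`-center of attraction of `x`, every closed `F`-center
of attraction of `x` contains it, and it is the unique minimal such set. -/
theorem minCenter_isCenterOfAttraction_and_minimal
    {G : Type*} [Group G] [Infinite G] [DecidableEq G]
    {D : Type*} [Preorder D] [IsDirected D (· ≤ ·)] [Nonempty D]
    {X : Type*} [MetricSpace X] [CompactSpace X] [MulAction G X]
    (hcont : ∀ g : G, Continuous fun y : X => g • y)
    (Fol : D → Finset G) (hFol : IsFolnerNet Fol) (x : X) :
    IsCenterOfAttraction Fol x (minCenter Fol x) ∧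
    (∀ C : Set X, IsCenterOfAttraction Fol x C → minCenter Fol x ⊆ C) ∧
    (∀ C : Set X, IsCenterOfAttraction Fol x C →
      (∀ C' : Set X, C' ⊆ C → IsCenterOfAttraction Fol x C' → C' = C) →
      C = minCenter Fol x) :=
  minCenter_isCenterOfAttraction_and_minimal_general Fol hFol x
end

section
/- Let (G,X) be a G-system, F = (F_n)_{n∈D} a Følner net in G, and x, y ∈ X. If the pair {x,y} is asymptotic for (G,X), then C_F(x) = C_F(y). -/
open Filter Metric Set

/-- The pair `{x, y}` is asymptotic: for every `ε > 0` there is a finite `F ⊆ G` with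
`d(gx, gy) < ε` for all `g ∉ F`. -/
def IsAsymptoticPair (G : Type*) [Group G] {X : Type*} [MetricSpace X] [MulAction G X]
    (x y : X) : Prop :=
  ∀ ε : ℝ, 0 < ε → ∃ F : Finset G, ∀ g : G, g ∉ F → dist (g • x) (g • y) < ε

section AuxProofs

variable {G : Type*} [Group G] [DecidableEq G]

/-- Combinatorial core: if a nonempty finite set `F` is sufficiently invariant under each of
the `T.card` translations by elements of `T`, then `F` has at least `T.card` elements. -/
lemma aux_key_card (F T : Finset G) (hF : F.Nonempty)
    (h : ∀ g ∈ T, ((symmDiff (F.image fun h => g * h) F).card : ℝ) / F.card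
        < 1 / (2 * T.card)) : T.card ≤ F.card := by
  rcases Nat.eq_zero_or_pos T.card with h0 | hk
  · omega
  by_contra hlt
  push_neg at hlt
  have hc : (0:ℝ) < F.card := by exact_mod_cast Finset.card_pos.mpr hF
  have hkR : (0:ℝ) < T.card := by exact_mod_cast hk
  -- rewrite the intersections as filters
  have hgF : ∀ g : G, (F.image fun h => g * h) ∩ F = F.filter (fun a => g⁻¹ * a ∈ F) := by
    intro g
    ext a
    simp only [Finset.mem_inter, Finset.mem_image, Finset.mem_filter]
    constructor
    · rintro ⟨⟨b, hb, rfl⟩, ha⟩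
      exact ⟨ha, by simpa using hb⟩
    · rintro ⟨ha, hb⟩
      exact ⟨⟨g⁻¹ * a, hb, by simp⟩, ha⟩
  -- lower bound on each intersection
  have h1 : ∀ g ∈ T, (F.card : ℝ) - F.card / (2 * T.card)
      ≤ (((F.image fun h => g * h) ∩ F).card : ℝ) := by
    intro g hg
    have h2 := h g hg
    have hsd : (((F.image fun h => g * h) \ F).card : ℝ)
        ≤ ((symmDiff (F.image fun h => g * h) F).card : ℝ) := by
      refine .trans ?_ le_rfl
      exact_mod_cast Finset.card_le_card fun a ha => Finset.mem_symmDiff.mpr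
        (Or.inl ((Finset.mem_sdiff.mp ha)))
    have himg : ((F.image fun h => g * h).card : ℝ) = F.card := by
      exact_mod_cast Finset.card_image_of_injective _ (mul_right_injective g)
    have hsplit : (((F.image fun h => g * h) ∩ F).card : ℝ)
        + (((F.image fun h => g * h) \ F).card : ℝ) = F.card := by
      rw [← himg]; exact_mod_cast Finset.card_inter_add_card_sdiff _ _
    have h3 : ((symmDiff (F.image fun h => g * h) F).card : ℝ) < F.card / (2 * T.card) :=
      ((div_lt_iff₀ hc).mp h2).trans_eq (by ring)
    linarith
  -- double counting: sum of intersections is at most F.card ^ 2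
  have hsum : (∑ g ∈ T, ((F.image fun h => g * h) ∩ F).card) ≤ F.card * F.card := by
    calc (∑ g ∈ T, ((F.image fun h => g * h) ∩ F).card)
        = ∑ g ∈ T, (F.filter (fun a => g⁻¹ * a ∈ F)).card := by
          refine Finset.sum_congr rfl fun g _ => by rw [hgF]
      _ = ∑ g ∈ T, ∑ a ∈ F, (if g⁻¹ * a ∈ F then 1 else 0) := by
          refine Finset.sum_congr rfl fun g _ => Finset.card_filter _ _
      _ = ∑ a ∈ F, ∑ g ∈ T, (if g⁻¹ * a ∈ F then 1 else 0) := Finset.sum_comm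
      _ = ∑ a ∈ F, (T.filter (fun g => g⁻¹ * a ∈ F)).card := by
          refine Finset.sum_congr rfl fun a _ => (Finset.card_filter _ _).symm
      _ ≤ ∑ a ∈ F, F.card := by
          refine Finset.sum_le_sum fun a _ => ?_
          refine Finset.card_le_card_of_injOn (fun g => g⁻¹ * a) ?_ ?_
          · intro g hg
            exact (Finset.mem_filter.mp hg).2
          · intro g₁ _ g₂ _ hgg
            have : g₁⁻¹ = g₂⁻¹ := mul_right_cancel hgg
            simpa using congrArg (·⁻¹) this
      _ = F.card * F.card := by rw [Finset.sum_const, smul_eq_mul]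
  -- lower bound on the sum
  have hsum2 : (T.card : ℝ) * ((F.card : ℝ) - F.card / (2 * T.card))
      ≤ ∑ g ∈ T, (((F.image fun h => g * h) ∩ F).card : ℝ) := by
    calc (T.card : ℝ) * ((F.card : ℝ) - F.card / (2 * T.card))
        = ∑ _g ∈ T, ((F.card : ℝ) - F.card / (2 * T.card)) := by
          rw [Finset.sum_const, nsmul_eq_mul]
      _ ≤ _ := Finset.sum_le_sum h1
  have hsumR : (∑ g ∈ T, (((F.image fun h => g * h) ∩ F).card : ℝ))
      ≤ (F.card : ℝ) * F.card := by exact_mod_cast hsum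
  have hFcard : (F.card : ℝ) ≤ (T.card : ℝ) - 1 := by
    have : F.card + 1 ≤ T.card := hlt
    have := (Nat.cast_le (α := ℝ)).mpr this
    push_cast at this
    linarith
  have hdiv : (F.card : ℝ) / (2 * T.card) * (2 * T.card) = F.card := by
    field_simp
  nlinarith [hsum2.trans hsumR, mul_le_mul_of_nonneg_left hFcard (le_of_lt hc), hdiv]

variable {D : Type*} [Preorder D] [IsDirected D (· ≤ ·)] [Nonempty D]

/-- In an infinite group, the cardinalities of a Følner net tend to infinity. -/
lemma aux_folner_card [Infinite G] (Fol : D → Finset G) (hFol : IsFolnerNet Fol) (k : ℕ) :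
    ∃ m : D, ∀ n, m ≤ n → k ≤ (Fol n).card := by
  rcases Nat.eq_zero_or_pos k with h0 | hk
  · exact ⟨Classical.arbitrary D, fun n _ => h0 ▸ Nat.zero_le _⟩
  obtain ⟨T, hT⟩ := Infinite.exists_subset_card_eq G k
  have hpos : (0:ℝ) < 1 / (2 * T.card) := by
    rw [hT]
    positivity
  have hev : ∀ᶠ n in atTop, ∀ g ∈ T,
      ((symmDiff ((Fol n).image fun h => g * h) (Fol n)).card : ℝ) / (Fol n).card
        < 1 / (2 * T.card) := by
    rw [Filter.eventually_all_finset]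
    intro g _
    exact (hFol.2 g).eventually (eventually_lt_nhds hpos)
  obtain ⟨m, hm⟩ := Filter.mem_atTop_sets.mp hev
  exact ⟨m, fun n hn => hT ▸ aux_key_card (Fol n) T (hFol.1 n) (hm n hn)⟩

lemma aux_bddAbove (Fol : D → Finset G) (hFol : IsFolnerNet Fol) (C : Set G) :
    BddAbove {α : ℝ | ∀ m : D, ∃ n : D, m ≤ n ∧
      α ≤ (((Fol n : Set G) ∩ C).ncard : ℝ) / (Fol n).card} := by
  refine ⟨1, fun α hα => ?_⟩
  obtain ⟨n, -, hle⟩ := hα (Classical.arbitrary D)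
  refine hle.trans ?_
  have hc : (0:ℝ) < (Fol n).card := by exact_mod_cast Finset.card_pos.mpr (hFol.1 n)
  rw [div_le_one hc]
  have : ((Fol n : Set G) ∩ C).ncard ≤ (Fol n).card := by
    calc ((Fol n : Set G) ∩ C).ncard ≤ (Fol n : Set G).ncard :=
          Set.ncard_le_ncard Set.inter_subset_left (Fol n).finite_toSet
      _ = (Fol n).card := Set.ncard_coe_finset _
  exact_mod_cast this

/-- Transfer of positive upper density through a finite modification. -/
lemma aux_density_pos [Infinite G] (Fol : D → Finset G) (hFol : IsFolnerNet Fol)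
    {A B : Set G} (E : Finset G) (hsub : ∀ g, g ∈ A → g ∉ E → g ∈ B)
    (hA : 0 < upperDensity Fol A) : 0 < upperDensity Fol B := by
  set SA := {α : ℝ | ∀ m : D, ∃ n : D, m ≤ n ∧
    α ≤ (((Fol n : Set G) ∩ A).ncard : ℝ) / (Fol n).card} with hSA
  have h0mem : (0:ℝ) ∈ SA := fun m => ⟨m, le_refl m, by positivity⟩
  obtain ⟨α, hαmem, hαpos⟩ : ∃ α ∈ SA, 0 < α := by
    by_contra hcon
    push_neg at hcon
    have : upperDensity Fol A ≤ 0 := csSup_le ⟨0, h0mem⟩ hcon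
    linarith
  set k := max 1 ⌈((2 * E.card : ℕ) : ℝ) / α⌉₊ with hkdef
  obtain ⟨m₀, hm₀⟩ := aux_folner_card Fol hFol k
  have hmem : α / 2 ∈ {β : ℝ | ∀ m : D, ∃ n : D, m ≤ n ∧
      β ≤ (((Fol n : Set G) ∩ B).ncard : ℝ) / (Fol n).card} := by
    intro m
    obtain ⟨m', hm1, hm2⟩ := directed_of (· ≤ ·) m m₀
    obtain ⟨n, hn1, hn2⟩ := hαmem m'
    refine ⟨n, hm1.trans hn1, ?_⟩
    have hcard : k ≤ (Fol n).card := hm₀ n (hm2.trans hn1)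
    have hc : (0:ℝ) < (Fol n).card := by
      have : 0 < (Fol n).card := lt_of_lt_of_le (lt_of_lt_of_le one_pos (le_max_left _ _)) hcard
      exact_mod_cast this
    have hck : ((k:ℝ)) ≤ (Fol n).card := by exact_mod_cast hcard
    have hek : ((2 * E.card : ℕ) : ℝ) / α ≤ (k : ℝ) := by
      refine (Nat.le_ceil _).trans ?_
      have : ⌈((2 * E.card : ℕ) : ℝ) / α⌉₊ ≤ k := by
        rw [hkdef]
        exact le_max_right _ _
      exact_mod_cast this
    have he : (E.card : ℝ) ≤ α * (Fol n).card / 2 := by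
      have h1 : ((2 * E.card : ℕ) : ℝ) ≤ α * k := by
        have := (div_le_iff₀ hαpos).mp hek
        linarith
      push_cast at h1
      nlinarith
    -- the set inclusion
    have hincl : (Fol n : Set G) ∩ A ⊆ ((Fol n : Set G) ∩ B) ∪ ↑E := by
      rintro g ⟨hgF, hgA⟩
      by_cases hgE : g ∈ E
      · exact Or.inr hgE
      · exact Or.inl ⟨hgF, hsub g hgA hgE⟩
    have hfinB : ((Fol n : Set G) ∩ B).Finite :=
      (Fol n).finite_toSet.subset Set.inter_subset_left
    have hab : (((Fol n : Set G) ∩ A).ncard : ℝ)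
        ≤ (((Fol n : Set G) ∩ B).ncard : ℝ) + E.card := by
      have h1 : ((Fol n : Set G) ∩ A).ncard ≤ (((Fol n : Set G) ∩ B) ∪ ↑E).ncard :=
        Set.ncard_le_ncard hincl (hfinB.union (E.finite_toSet))
      have h2 : (((Fol n : Set G) ∩ B) ∪ (E : Set G)).ncard
          ≤ ((Fol n : Set G) ∩ B).ncard + (E : Set G).ncard := Set.ncard_union_le _ _
      have h3 : (E : Set G).ncard = E.card := Set.ncard_coe_finset _
      exact_mod_cast (h1.trans h2).trans_eq (by rw [h3])
    have ha : α * (Fol n).card ≤ (((Fol n : Set G) ∩ A).ncard : ℝ) :=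
      (le_div_iff₀ hc).mp hn2
    rw [le_div_iff₀ hc]
    nlinarith
  have hle : α / 2 ≤ upperDensity Fol B := le_csSup (aux_bddAbove Fol hFol B) hmem
  linarith

/-- One inclusion of the minimal centers for an asymptotic pair. -/
lemma aux_minCenter_subset [Infinite G] {X : Type*} [MetricSpace X] [MulAction G X]
    (Fol : D → Finset G) (hFol : IsFolnerNet Fol) (x y : X)
    (hasym : IsAsymptoticPair G x y) : minCenter Fol x ⊆ minCenter Fol y := by
  intro z hz U hU hzU
  obtain ⟨r, hr, hball⟩ := Metric.isOpen_iff.mp hU z hzU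
  obtain ⟨E, hE⟩ := hasym (r / 2) (by linarith)
  have hV := hz (ball z (r / 2)) isOpen_ball (mem_ball_self (by linarith))
  refine aux_density_pos Fol hFol E (fun g hg hgE => ?_) hV
  have h1 : dist (g • x) z < r / 2 := by simpa [mem_ball] using hg
  have h2 : dist (g • x) (g • y) < r / 2 := hE g hgE
  refine hball ?_
  rw [mem_ball]
  calc dist (g • y) z ≤ dist (g • y) (g • x) + dist (g • x) z := dist_triangle _ _ _
    _ < r / 2 + r / 2 := by rw [dist_comm]; exact add_lt_add h2 h1
    _ = r := by ring

end AuxProofs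

/-- Proposition 2.10: if `{x, y}` is asymptotic then `C_F(x) = C_F(y)`. -/
theorem minCenter_eq_of_asymptotic
    {G : Type*} [Group G] [Infinite G] [DecidableEq G]
    {D : Type*} [Preorder D] [IsDirected D (· ≤ ·)] [Nonempty D]
    {X : Type*} [MetricSpace X] [CompactSpace X] [MulAction G X]
    (hcont : ∀ g : G, Continuous fun y : X => g • y)
    (Fol : D → Finset G) (hFol : IsFolnerNet Fol) (x y : X)
    (hasym : IsAsymptoticPair G x y) :
    minCenter Fol x = minCenter Fol y := by
  have hasym' : IsAsymptoticPair G y x := by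
    intro ε hε
    obtain ⟨E, hE⟩ := hasym ε hε
    exact ⟨E, fun g hg => by rw [dist_comm]; exact hE g hg⟩
  exact Set.Subset.antisymm (aux_minCenter_subset Fol hFol x y hasym)
    (aux_minCenter_subset Fol hFol y x hasym')
end

section
/- Let (G,X) be a G-system and x ∈ X. If Λ is a nonempty G-invariant closed subset of the closure of the orbit Gx, then for every open set U ⊆ X containing Λ, the set N(x,U) is thick in G. -/
open Filter Metric Set

/-- `P ⊆ G` is thick: for every finite `A ⊆ G` there exists `t ∈ G` with `At ⊆ P`. -/
def IsThickSet {G : Type*} [Group G] (P : Set G) : Prop :=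
  ∀ A : Finset G, ∃ t : G, ∀ a ∈ A, a * t ∈ P

/-- Proposition 2.11: if `Λ` is a nonempty `G`-invariant closed subset of the orbit closure
of `x`, then for every open neighborhood `U` of `Λ`, the set `N(x, U)` is thick in `G`. -/
theorem thick_of_invariant_subset_orbitClosure
    {G : Type*} [Group G] [Infinite G]
    {X : Type*} [MetricSpace X] [CompactSpace X] [MulAction G X]
    (hcont : ∀ g : G, Continuous fun y : X => g • y)
    (x : X) (Λ : Set X) (hne : Λ.Nonempty) (hclosed : IsClosed Λ)
    (hinv : ∀ g : G, ∀ z ∈ Λ, g • z ∈ Λ)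
    (hsub : Λ ⊆ closure (MulAction.orbit G x))
    (U : Set X) (hU : IsOpen U) (hΛU : Λ ⊆ U) :
    IsThickSet {g : G | g • x ∈ U} := by
  intro A
  obtain ⟨z, hz⟩ := hne
  set V : Set X := ⋂ a ∈ A, (fun y => a • y) ⁻¹' U with hVdef
  have hV : IsOpen V := isOpen_biInter_finset fun a _ => hU.preimage (hcont a)
  have hzV : z ∈ V := mem_iInter₂.2 fun a _ => hΛU (hinv a z hz)
  have hcl := hsub hz
  rw [_root_.mem_closure_iff] at hcl
  obtain ⟨y, hyV, hyorb⟩ := hcl V hV hzV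
  obtain ⟨t, rfl⟩ := hyorb
  refine ⟨t, fun a ha => ?_⟩
  have := mem_iInter₂.1 hyV a ha
  simpa [mul_smul] using this
end

section
/- Let (G,X) be a G-system, x ∈ X, and F = (F_n)_{n∈D} a Følner net in G. Suppose C_F(x) is not S-generic, i.e., there is no point z ∈ C_F(x) with C_F(z) = C_F(x). Then for every nonempty closed G-invariant subset Λ ⊆ C_F(x), there exists a point y ∈ Λ such that the pair {x,y} is Li–Yorke chaotic for (G,X), i.e., proximal but not asymptotic. -/
set_option linter.unusedSectionVars false
set_option linter.unusedVariables false
set_option maxHeartbeats 1000000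


open Filter Metric Set

section Aux

variable {G : Type*} [Group G] [DecidableEq G]
variable {D : Type*} [Preorder D] [IsDirected D (· ≤ ·)] [Nonempty D]

lemma zero_mem_densSet (F : D → Finset G) (A : Set G) :
    (0:ℝ) ∈ {α : ℝ | ∀ m : D, ∃ n : D, m ≤ n ∧
      α ≤ (((F n : Set G) ∩ A).ncard : ℝ) / (F n).card} :=
  fun m => ⟨m, le_refl m, by positivity⟩

lemma densSet_bddAbove (F : D → Finset G) (hF : ∀ n, (F n).Nonempty) (A : Set G) :
    BddAbove {α : ℝ | ∀ m : D, ∃ n : D, m ≤ n ∧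
      α ≤ (((F n : Set G) ∩ A).ncard : ℝ) / (F n).card} := by
  refine ⟨1, fun α hα => ?_⟩
  obtain ⟨n, -, h⟩ := hα (Classical.arbitrary D)
  refine h.trans ?_
  rw [div_le_one (by exact_mod_cast (hF n).card_pos)]
  exact_mod_cast (Set.ncard_le_ncard Set.inter_subset_left
    (F n).finite_toSet).trans_eq (Set.ncard_coe_finset _)

lemma upperDensity_mono (F : D → Finset G) (hF : ∀ n, (F n).Nonempty)
    {A B : Set G} (h : A ⊆ B) : upperDensity F A ≤ upperDensity F B := by
  refine csSup_le_csSup (densSet_bddAbove F hF B) ⟨0, zero_mem_densSet F A⟩ ?_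
  intro α hα m
  obtain ⟨n, hmn, hle⟩ := hα m
  refine ⟨n, hmn, hle.trans ?_⟩
  have hc : ((F n : Set G) ∩ A).ncard ≤ ((F n : Set G) ∩ B).ncard :=
    Set.ncard_le_ncard (Set.inter_subset_inter_right _ h)
      ((F n).finite_toSet.inter_of_left _)
  gcongr


lemma upperDensity_empty (F : D → Finset G) (hF : ∀ n, (F n).Nonempty) :
    upperDensity F (∅ : Set G) = 0 := by
  have : {α : ℝ | ∀ m : D, ∃ n : D, m ≤ n ∧
      α ≤ (((F n : Set G) ∩ (∅ : Set G)).ncard : ℝ) / (F n).card} = Set.Iic 0 := by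
    ext α
    simp only [Set.mem_setOf_eq, Set.mem_Iic, Set.inter_empty, Set.ncard_empty,
      Nat.cast_zero, zero_div]
    constructor
    · intro h
      obtain ⟨n, -, h⟩ := h (Classical.arbitrary D)
      exact h
    · intro h m
      exact ⟨m, le_refl m, h⟩
  rw [upperDensity, this, csSup_Iic]

lemma folner_card_large [Infinite G] (F : D → Finset G) (hF : IsFolnerNet F) (K : ℕ) :
    ∀ᶠ n in (atTop : Filter D), K ≤ (F n).card := by
  rcases Nat.eq_zero_or_pos K with rfl | hK
  · exact Filter.Eventually.of_forall fun n => Nat.zero_le _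
  obtain ⟨S, hS⟩ := Infinite.exists_subset_card_eq G K
  have hev : ∀ᶠ n in (atTop : Filter D), ∀ g ∈ S,
      ((symmDiff ((F n).image fun h => g * h) (F n)).card : ℝ) / (F n).card < 1 / K := by
    rw [Filter.eventually_all_finset]
    intro g _
    exact (hF.2 g).eventually (gt_mem_nhds (by positivity))
  filter_upwards [hev] with n hn
  by_contra hlt
  push_neg at hlt
  have hcpos : (0:ℝ) < (F n).card := by exact_mod_cast (hF.1 n).card_pos
  have heq : ∀ g ∈ S, (F n).image (fun h => g * h) = F n := by
    intro g hg
    have h1 := hn g hg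
    rw [div_lt_div_iff₀ hcpos (by positivity)] at h1
    have h2 : ((symmDiff ((F n).image fun h => g * h) (F n)).card : ℝ) * K < K := by
      calc ((symmDiff ((F n).image fun h => g * h) (F n)).card : ℝ) * K
          < (F n).card * 1 := by simpa using h1
        _ = ((F n).card : ℝ) := mul_one _
        _ < K := by exact_mod_cast hlt
    have h3 : (symmDiff ((F n).image fun h => g * h) (F n)).card = 0 := by
      by_contra h0
      have : (1:ℝ) ≤ (symmDiff ((F n).image fun h => g * h) (F n)).card := by
        exact_mod_cast Nat.one_le_iff_ne_zero.mpr h0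
      nlinarith [show (0:ℝ) < (K:ℝ) by exact_mod_cast hK]
    have := Finset.card_eq_zero.mp h3
    exact symmDiff_eq_bot.mp this
  obtain ⟨a, ha⟩ := hF.1 n
  have hsub : S.image (fun g => g * a) ⊆ F n := by
    intro b hb
    obtain ⟨g, hg, rfl⟩ := Finset.mem_image.mp hb
    rw [← heq g hg]
    exact Finset.mem_image_of_mem _ ha
  have := Finset.card_le_card hsub
  rw [Finset.card_image_of_injective _ (mul_left_injective a), hS] at this
  omega

lemma upperDensity_diff_finset [Infinite G] (F : D → Finset G) (hF : IsFolnerNet F)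
    (A : Set G) (B : Finset G) :
    upperDensity F A ≤ upperDensity F (A \ ↑B) := by
  have key : ∀ δ : ℝ, 0 < δ → ∀ α ∈ {α : ℝ | ∀ m : D, ∃ n : D, m ≤ n ∧
      α ≤ (((F n : Set G) ∩ A).ncard : ℝ) / (F n).card},
      α - δ ∈ {α : ℝ | ∀ m : D, ∃ n : D, m ≤ n ∧
      α ≤ (((F n : Set G) ∩ (A \ ↑B)).ncard : ℝ) / (F n).card} := by
    intro δ hδ α hα m
    obtain ⟨m₀, hm₀⟩ := Filter.eventually_atTop.mp
      (folner_card_large F hF ⌈(B.card : ℝ) / δ⌉₊)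
    obtain ⟨m', hmm', hm₀m'⟩ := exists_ge_ge m m₀
    obtain ⟨n, hm'n, hαn⟩ := hα m'
    refine ⟨n, hmm'.trans hm'n, ?_⟩
    have hcard : (⌈(B.card : ℝ) / δ⌉₊ : ℝ) ≤ (F n).card := by
      exact_mod_cast hm₀ n (hm₀m'.trans hm'n)
    have hBδ : (B.card : ℝ) ≤ δ * (F n).card := by
      have h1 : (B.card : ℝ) / δ ≤ (F n).card := (Nat.le_ceil _).trans hcard
      rw [div_le_iff₀ hδ] at h1
      linarith
    have hcpos : (0:ℝ) < (F n).card := by exact_mod_cast (hF.1 n).card_pos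
    have hsubadd : (((F n : Set G) ∩ A).ncard : ℝ) ≤
        (((F n : Set G) ∩ (A \ ↑B)).ncard : ℝ) + B.card := by
      have hss : (F n : Set G) ∩ A ⊆ ((F n : Set G) ∩ (A \ ↑B)) ∪ ↑B := by
        rintro g ⟨hg1, hg2⟩
        by_cases hgB : g ∈ (B : Set G)
        · exact Or.inr hgB
        · exact Or.inl ⟨hg1, hg2, hgB⟩
      have h1 : ((F n : Set G) ∩ A).ncard ≤ (((F n : Set G) ∩ (A \ ↑B)) ∪ ↑B).ncard :=
        Set.ncard_le_ncard hss
          (((F n).finite_toSet.inter_of_left _).union B.finite_toSet)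
      have h2 := Set.ncard_union_le ((F n : Set G) ∩ (A \ ↑B)) (↑B : Set G)
      have h3 : ((B : Set G)).ncard = B.card := Set.ncard_coe_finset B
      push_cast
      calc (((F n : Set G) ∩ A).ncard : ℝ) ≤ ((((F n : Set G) ∩ (A \ ↑B)) ∪ ↑B).ncard : ℝ) := by
            exact_mod_cast h1
        _ ≤ (((F n : Set G) ∩ (A \ ↑B)).ncard : ℝ) + ((B : Set G)).ncard := by exact_mod_cast h2
        _ = (((F n : Set G) ∩ (A \ ↑B)).ncard : ℝ) + B.card := by rw [h3]
    rw [sub_le_iff_le_add]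
    calc α ≤ (((F n : Set G) ∩ A).ncard : ℝ) / (F n).card := hαn
      _ ≤ ((((F n : Set G) ∩ (A \ ↑B)).ncard : ℝ) + B.card) / (F n).card := by
          gcongr
      _ ≤ (((F n : Set G) ∩ (A \ ↑B)).ncard : ℝ) / (F n).card + δ := by
          rw [add_div]
          gcongr
          rw [div_le_iff₀ hcpos]
          linarith
  refine le_of_forall_pos_le_add ?_
  intro δ hδ
  refine csSup_le ⟨0, zero_mem_densSet F A⟩ ?_
  intro α hα
  have := le_csSup (densSet_bddAbove F hF.1 (A \ ↑B)) (key δ hδ α hα)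
  rw [upperDensity]
  linarith

end Aux

/-- The pair `{x, y}` is proximal. -/
def IsProximalPair (G : Type*) [Group G] {X : Type*} [MetricSpace X] [MulAction G X]
    (x y : X) : Prop :=
  ∃ t : ℕ → G, Tendsto (fun n => dist ((t n) • x) ((t n) • y)) atTop (nhds 0)

lemma exists_proximal_in {G : Type*} [Group G] {X : Type*} [MetricSpace X] [CompactSpace X]
    [MulAction G X] (hcont : ∀ g : G, Continuous fun y : X => g • y)
    (x : X) (Λ : Set X) (hne : Λ.Nonempty) (hclosed : IsClosed Λ)
    (hinv : ∀ g : G, ∀ z ∈ Λ, g • z ∈ Λ)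
    (horb : Λ ⊆ closure (Set.range fun g : G => g • x)) :
    ∃ y ∈ Λ, ∀ ε : ℝ, 0 < ε → ∃ g : G, dist (g • x) (g • y) < ε := by
  letI : Semigroup (X → X) := { mul := fun f g => f ∘ g, mul_assoc := fun _ _ _ => rfl }
  set T : G → (X → X) := fun g => (g • ·) with hT
  set E : Set (X → X) := closure (Set.range T) with hE
  have contR : ∀ r : X → X, Continuous (· * r) := fun r =>
    continuous_pi fun z => continuous_apply (r z)
  have contL : ∀ f : X → X, Continuous f → Continuous (f * ·) := fun f hf =>
    continuous_pi fun z => hf.comp (continuous_apply z)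
  have hTE : ∀ g : G, T g ∈ E := fun g => subset_closure ⟨g, rfl⟩
  have hmulE : ∀ p ∈ E, ∀ q ∈ E, p * q ∈ E := by
    intro p hp q hq
    have h1 : ∀ g : G, T g * q ∈ E := by
      intro g
      have himg : (fun r => T g * r) '' Set.range T ⊆ Set.range T := by
        rintro _ ⟨_, ⟨h, rfl⟩, rfl⟩
        exact ⟨g * h, funext fun z => mul_smul g h z⟩
      have := (image_closure_subset_closure_image (s := Set.range T)
        (contL (T g) (hcont g))).trans (closure_mono himg)
      exact this ⟨q, hq, rfl⟩
    have hcl : IsClosed {p : X → X | p * q ∈ E} :=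
      IsClosed.preimage (contR q) isClosed_closure
    have h2 : E ⊆ {p : X → X | p * q ∈ E} := by
      rw [hE]
      apply closure_minimal _ hcl
      rintro _ ⟨g, rfl⟩
      exact h1 g
    exact h2 hp
  have hEΛ : ∀ p ∈ E, ∀ z ∈ Λ, p z ∈ Λ := by
    intro p hp z hz
    have h1 : (fun q : X → X => q z) '' Set.range T ⊆ Λ := by
      rintro _ ⟨_, ⟨g, rfl⟩, rfl⟩
      exact hinv g z hz
    have h2 := image_closure_subset_closure_image (s := Set.range T) (continuous_apply z)
    have h3 : p z ∈ closure Λ := closure_mono h1 (h2 ⟨p, hp, rfl⟩)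
    rwa [hclosed.closure_eq] at h3
  set s : Set (X → X) := E ∩ {p : X → X | p x ∈ Λ} with hs
  have hcompE : IsCompact E := isClosed_closure.isCompact
  obtain ⟨y₀, hy₀⟩ := hne
  have himgΛ : Λ ⊆ (fun p : X → X => p x) '' E := by
    have hcl : IsClosed ((fun p : X → X => p x) '' E) :=
      (hcompE.image (continuous_apply x)).isClosed
    have hr : Set.range (fun g : G => g • x) ⊆ (fun p : X → X => p x) '' E := by
      rintro _ ⟨g, rfl⟩
      exact ⟨T g, hTE g, rfl⟩
    exact horb.trans (closure_minimal hr hcl)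
  obtain ⟨p₀, hp₀E, hp₀x⟩ := himgΛ hy₀
  have hs_ne : s.Nonempty := ⟨p₀, hp₀E, show p₀ x ∈ Λ from (show p₀ x = y₀ from hp₀x) ▸ hy₀⟩
  have hs_cpt : IsCompact s :=
    (isClosed_closure.inter (IsClosed.preimage (continuous_apply x) hclosed)).isCompact
  have hs_mul : ∀ p ∈ s, ∀ q ∈ s, p * q ∈ s := fun p hp q hq =>
    ⟨hmulE p hp.1 q hq.1, hEΛ p hp.1 (q x) hq.2⟩
  obtain ⟨u, hus, huu⟩ := exists_idempotent_in_compact_subsemigroup contR s hs_ne hs_cpt hs_mul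
  refine ⟨u x, hus.2, ?_⟩
  intro ε hε
  have hux : u (u x) = u x := congrFun huu x
  have hc1 : Continuous fun p : X → X => dist (p x) (u x) :=
    (continuous_apply x).dist continuous_const
  have hc2 : Continuous fun p : X → X => dist (p (u x)) (u x) :=
    (continuous_apply (u x)).dist continuous_const
  have hV : IsOpen {p : X → X | dist (p x) (u x) < ε / 2 ∧ dist (p (u x)) (u x) < ε / 2} :=
    (isOpen_lt hc1 continuous_const).inter (isOpen_lt hc2 continuous_const)
  have huV : u ∈ {p : X → X | dist (p x) (u x) < ε / 2 ∧ dist (p (u x)) (u x) < ε / 2} :=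
    ⟨by simpa using half_pos hε, by
      show dist (u (u x)) (u x) < ε / 2
      rw [hux]; simpa using half_pos hε⟩
  obtain ⟨_, hv, g, rfl⟩ := mem_closure_iff.mp hus.1 _ hV huV
  refine ⟨g, ?_⟩
  calc dist (g • x) (g • u x) ≤ dist (g • x) (u x) + dist (u x) (g • u x) := dist_triangle _ _ _
    _ < ε / 2 + ε / 2 := add_lt_add hv.1 (by rw [dist_comm]; exact hv.2)
    _ = ε := add_halves ε

section Main

variable {G : Type*} [Group G] [DecidableEq G]
variable {D : Type*} [Preorder D] [IsDirected D (· ≤ ·)] [Nonempty D]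
variable {X : Type*} [MetricSpace X] [MulAction G X]

lemma minCenter_subset_closure_orbit (Fol : D → Finset G) (hF : ∀ n, (Fol n).Nonempty)
    (x : X) : minCenter Fol x ⊆ closure (Set.range fun g : G => g • x) := by
  intro y hy
  by_contra hyc
  have hU : IsOpen (closure (Set.range fun g : G => g • x))ᶜ := isClosed_closure.isOpen_compl
  have h0 := hy _ hU hyc
  have hempty : {g : G | g • x ∈ (closure (Set.range fun g : G => g • x))ᶜ} = ∅ := by
    ext g
    simp only [Set.mem_setOf_eq, Set.mem_compl_iff, Set.mem_empty_iff_false, iff_false,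
      not_not]
    exact subset_closure ⟨g, rfl⟩
  rw [hempty, upperDensity_empty Fol hF] at h0
  exact lt_irrefl 0 h0

lemma minCenter_subset_of_asymptotic [Infinite G] (Fol : D → Finset G)
    (hFol : IsFolnerNet Fol) {x y : X} (h : IsAsymptoticPair G x y) :
    minCenter Fol y ⊆ minCenter Fol x := by
  intro z hz U hU hzU
  obtain ⟨ε, hε, hball⟩ := Metric.isOpen_iff.1 hU z hzU
  obtain ⟨F₀, hF₀⟩ := h (ε / 2) (half_pos hε)
  have hsub : {g : G | g • y ∈ ball z (ε / 2)} \ ↑F₀ ⊆ {g : G | g • x ∈ U} := by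
    rintro g ⟨hg1, hg2⟩
    apply hball
    rw [mem_ball]
    calc dist (g • x) z ≤ dist (g • x) (g • y) + dist (g • y) z := dist_triangle _ _ _
      _ < ε / 2 + ε / 2 := add_lt_add (hF₀ g hg2) hg1
      _ = ε := add_halves ε
  have h1 := hz (ball z (ε / 2)) isOpen_ball (mem_ball_self (half_pos hε))
  calc (0:ℝ) < upperDensity Fol {g : G | g • y ∈ ball z (ε / 2)} := h1
    _ ≤ upperDensity Fol ({g : G | g • y ∈ ball z (ε / 2)} \ ↑F₀) :=
        upperDensity_diff_finset Fol hFol _ F₀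
    _ ≤ upperDensity Fol {g : G | g • x ∈ U} := upperDensity_mono Fol hFol.1 hsub

lemma isAsymptoticPair_symm {x y : X} (h : IsAsymptoticPair G x y) :
    IsAsymptoticPair G y x := by
  intro ε hε
  obtain ⟨F₀, hF₀⟩ := h ε hε
  exact ⟨F₀, fun g hg => by rw [dist_comm]; exact hF₀ g hg⟩

end Main

/-- Theorem 3.2: if `C_F(x)` is not S-generic, then every nonempty closed `G`-invariant
subset `Λ ⊆ C_F(x)` contains a point `y` such that `{x, y}` is Li–Yorke chaotic. -/
theorem liYorke_pair_of_not_Sgeneric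
    {G : Type*} [Group G] [Infinite G] [DecidableEq G]
    {D : Type*} [Preorder D] [IsDirected D (· ≤ ·)] [Nonempty D]
    {X : Type*} [MetricSpace X] [CompactSpace X] [MulAction G X]
    (hcont : ∀ g : G, Continuous fun y : X => g • y)
    (Fol : D → Finset G) (hFol : IsFolnerNet Fol) (x : X)
    (hnS : ¬ ∃ z ∈ minCenter Fol x, minCenter Fol z = minCenter Fol x)
    (Λ : Set X) (hne : Λ.Nonempty) (hclosed : IsClosed Λ)
    (hinv : ∀ g : G, ∀ z ∈ Λ, g • z ∈ Λ) (hsub : Λ ⊆ minCenter Fol x) :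
    ∃ y ∈ Λ, IsProximalPair G x y ∧ ¬ IsAsymptoticPair G x y := by
  have horb : Λ ⊆ closure (Set.range fun g : G => g • x) :=
    hsub.trans (minCenter_subset_closure_orbit Fol hFol.1 x)
  obtain ⟨y, hyΛ, hyprox⟩ := exists_proximal_in hcont x Λ hne hclosed hinv horb
  refine ⟨y, hyΛ, ?_, ?_⟩
  · choose t ht using fun n : ℕ => hyprox (1 / (n + 1)) (by positivity)
    refine ⟨t, squeeze_zero (fun n => dist_nonneg) (fun n => (ht n).le) ?_⟩
    exact tendsto_one_div_add_atTop_nhds_zero_nat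
  · intro hasym
    apply hnS
    refine ⟨y, hsub hyΛ, ?_⟩
    apply Set.Subset.antisymm
    · exact minCenter_subset_of_asymptotic Fol hFol hasym
    · exact minCenter_subset_of_asymptotic Fol hFol (isAsymptoticPair_symm hasym)
end

section
/- Let (G,X) be a G-system and F = (F_n)_{n∈D} a Følner net in G. If there exists x ∈ X with C_F(x) = X, then (G,X) is topologically ergodic: for any nonempty open sets U, V ⊆ X, the set N(U,V) = {g ∈ G : U ∩ g⁻¹V ≠ ∅} is syndetic in G. -/
/-!
Since `C_F(x) = X`, the orbit of `x` meets `U` and `V`, say `g₁ x ∈ U` and `g₂ x ∈ V`. With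
`h = g₂ g₁⁻¹` the open set `W = U ∩ h⁻¹ V` contains `g₁ x`, so `B = N(x, W)` has positive upper
density, and `h B B⁻¹ ⊆ N(U, V)`. It remains to see that `B B⁻¹` is syndetic: along a Følner net
every translate `a⁻¹ B` has almost the density of `B`, so pairwise disjoint families of translates
have bounded size, and a maximal one `{a⁻¹ B : a ∈ T}` meets every `g B`, i.e. `T g ∩ B B⁻¹ ≠ ∅`.
-/

open Filter Metric Set

/-- `S ⊆ G` is syndetic: there is a finite `F ⊆ G` with `⋃_{f ∈ F} f⁻¹ S = G`. -/
def IsSyndeticSet {G : Type*} [Group G] (S : Set G) : Prop :=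
  ∃ F : Finset G, ∀ g : G, ∃ f ∈ F, f * g ∈ S

/-- `z` is an almost periodic point: `N(z, U)` is syndetic for every open neighborhood `U`. -/
def IsAlmostPeriodicPt (G : Type*) [Group G] {X : Type*} [MetricSpace X] [MulAction G X]
    (z : X) : Prop :=
  ∀ U : Set X, IsOpen U → z ∈ U → IsSyndeticSet {g : G | g • z ∈ U}

open scoped Pointwise

section Syndetic

variable {G : Type*} [Group G] {S S' : Set G}

theorem IsSyndeticSet.mono (hS : IsSyndeticSet S) (hSS' : S ⊆ S') : IsSyndeticSet S' := by
  obtain ⟨F, hF⟩ := hS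
  exact ⟨F, fun g => (hF g).imp fun _ => And.imp_right (@hSS' _)⟩

theorem IsSyndeticSet.smul_set [DecidableEq G] (hS : IsSyndeticSet S) (h : G) :
    IsSyndeticSet (h • S) := by
  obtain ⟨F, hF⟩ := hS
  refine ⟨F.image (h * ·), fun g => ?_⟩
  obtain ⟨f, hfF, hfg⟩ := hF g
  exact ⟨h * f, Finset.mem_image_of_mem _ hfF, ⟨f * g, hfg, by simp [mul_assoc]⟩⟩

end Syndetic

theorem exists_finset_pairwiseDisjoint_forall_inter_nonempty {ι α : Type*} {f : ι → Set α}
    (hne : ∀ i, (f i).Nonempty) (N : ℕ)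
    (hN : ∀ T : Finset ι, (T : Set ι).PairwiseDisjoint f → T.card ≤ N) :
    ∃ T : Finset ι, (T : Set ι).PairwiseDisjoint f ∧ ∀ i, ∃ j ∈ T, (f i ∩ f j).Nonempty := by
  classical
  obtain ⟨T, hT, hmax⟩ := (InvImage.wf (fun T : Finset ι => N - T.card) wellFounded_lt).has_min
    {T | (T : Set ι).PairwiseDisjoint f} ⟨∅, by simp⟩
  refine ⟨T, hT, fun i => ?_⟩
  by_cases hi : i ∈ T
  · exact ⟨i, hi, by simpa using hne i⟩
  by_contra! hdisj
  have hins : ((insert i T : Finset ι) : Set ι).PairwiseDisjoint f := by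
    rw [Finset.coe_insert]
    exact hT.insert fun j hj _ => disjoint_iff_inter_eq_empty.mpr (hdisj j hj)
  have hcard : (insert i T).card = T.card + 1 := Finset.card_insert_of_notMem hi
  have hbound := hN _ hins
  exact hmax _ hins (show N - (insert i T).card < N - T.card by omega)

section Density

variable {G : Type*} {D : Type*} [Preorder D] {F : D → Finset G} {A : Set G}

theorem exists_pos_frequently_le_of_upperDensity_pos (hA : 0 < upperDensity F A) :
    ∃ α > 0, ∀ m : D, ∃ n : D, m ≤ n ∧ α ≤ (((F n : Set G) ∩ A).ncard : ℝ) / (F n).card := by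
  have hne : {α : ℝ | ∀ m : D, ∃ n : D, m ≤ n ∧
      α ≤ (((F n : Set G) ∩ A).ncard : ℝ) / (F n).card}.Nonempty := by
    by_contra h
    rw [not_nonempty_iff_eq_empty] at h
    simp [upperDensity, h] at hA
  obtain ⟨α, hα, hpos⟩ := exists_lt_of_lt_csSup hne hA
  exact ⟨α, hpos, hα⟩

theorem nonempty_of_upperDensity_pos [Nonempty D] (hA : 0 < upperDensity F A) : A.Nonempty := by
  obtain ⟨α, hα, hfreq⟩ := exists_pos_frequently_le_of_upperDensity_pos hA
  obtain ⟨n, -, hn⟩ := hfreq (Classical.arbitrary D)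
  by_contra h
  rw [not_nonempty_iff_eq_empty] at h
  simp [h] at hn
  linarith

end Density

section Counting

variable {G : Type*} [Group G] [DecidableEq G] (F : Finset G) (B : Set G) [DecidablePred (· ∈ B)]

theorem card_filter_le_card_filter_mul_left_add (a : G) :
    (F.filter (· ∈ B)).card ≤
      (F.filter (fun h => a * h ∈ B)).card + (symmDiff (F.image (a * ·)) F).card := by
  have hsub : F.filter (· ∈ B) ⊆ (F.image (a * ·)).filter (· ∈ B) ∪ (F \ F.image (a * ·)) := by
    intro h hh
    rw [Finset.mem_filter] at hh
    by_cases hi : h ∈ F.image (a * ·)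
    · exact Finset.mem_union_left _ (Finset.mem_filter.mpr ⟨hi, hh.2⟩)
    · exact Finset.mem_union_right _ (Finset.mem_sdiff.mpr ⟨hh.1, hi⟩)
  have himage : ((F.image (a * ·)).filter (· ∈ B)).card = (F.filter (fun h => a * h ∈ B)).card := by
    rw [Finset.filter_image, Finset.card_image_of_injective _ (mul_right_injective a)]
  have hsdiff : F \ F.image (a * ·) ⊆ symmDiff (F.image (a * ·)) F := fun h hh => by
    rw [Finset.mem_symmDiff]
    exact Or.inr (Finset.mem_sdiff.mp hh)
  calc (F.filter (· ∈ B)).card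
      ≤ ((F.image (a * ·)).filter (· ∈ B) ∪ (F \ F.image (a * ·))).card := Finset.card_le_card hsub
    _ ≤ ((F.image (a * ·)).filter (· ∈ B)).card + (F \ F.image (a * ·)).card :=
        Finset.card_union_le _ _
    _ ≤ _ := by rw [himage]; exact Nat.add_le_add_left (Finset.card_le_card hsdiff) _

theorem sum_card_filter_mul_left_le {T : Finset G}
    (hT : (T : Set G).PairwiseDisjoint fun a => (a * ·) ⁻¹' B) :
    ∑ a ∈ T, (F.filter (fun h => a * h ∈ B)).card ≤ F.card := by
  rw [← Finset.card_biUnion]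
  · exact Finset.card_le_card (Finset.biUnion_subset.mpr fun a _ => Finset.filter_subset _ _)
  · intro a ha b hb hab
    rw [Function.onFun, Finset.disjoint_left]
    intro h hha hhb
    exact disjoint_left.mp (hT ha hb hab) (Finset.mem_filter.mp hha).2 (Finset.mem_filter.mp hhb).2

end Counting

section Folner

variable {G : Type*} [Group G] [DecidableEq G] {D : Type*} [Preorder D] [IsDirected D (· ≤ ·)]
  [Nonempty D] {F : D → Finset G}

theorem card_le_of_pairwiseDisjoint_preimage_mul_left (hF : IsFolnerNet F) {B : Set G} {α : ℝ}
    (hα : 0 < α) (hB : ∀ m : D, ∃ n : D, m ≤ n ∧ α ≤ (((F n : Set G) ∩ B).ncard : ℝ) / (F n).card)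
    {T : Finset G} (hT : (T : Set G).PairwiseDisjoint fun a => (a * ·) ⁻¹' B) :
    (T.card : ℝ) ≤ 2 / α := by
  classical
  -- Once `F n` is `α / 2`-invariant under `T`, each translate of `B` fills `α / 2` of `F n`.
  have hev : ∀ᶠ n in atTop, ∀ a ∈ T,
      ((symmDiff ((F n).image (a * ·)) (F n)).card : ℝ) / (F n).card < α / 2 :=
    (eventually_all_finset T).mpr fun a _ => (hF.2 a).eventually_lt_const (by linarith)
  obtain ⟨m, hm⟩ := eventually_atTop.mp hev
  obtain ⟨n, hmn, hdense⟩ := hB m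
  have hcard : (0 : ℝ) < (F n).card := by exact_mod_cast (hF.1 n).card_pos
  have hinter : (((F n : Set G) ∩ B).ncard : ℝ) = ((F n).filter (· ∈ B)).card := by
    rw [← ncard_coe_finset, Finset.coe_filter]
    rfl
  rw [hinter, le_div_iff₀ hcard] at hdense
  have htranslate : ∀ a ∈ T, α / 2 * (F n).card ≤ ((F n).filter (fun h => a * h ∈ B)).card := by
    intro a ha
    have hsymm := (div_lt_iff₀ hcard).mp (hm n hmn a ha)
    have hcount : (((F n).filter (· ∈ B)).card : ℝ) ≤ ((F n).filter (fun h => a * h ∈ B)).card +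
        (symmDiff ((F n).image (a * ·)) (F n)).card := by
      exact_mod_cast card_filter_le_card_filter_mul_left_add (F n) B a
    linarith
  have hsum : T.card * (α / 2 * (F n).card) ≤ (F n).card := by
    calc T.card * (α / 2 * (F n).card)
        ≤ ∑ a ∈ T, (((F n).filter (fun h => a * h ∈ B)).card : ℝ) := by
          simpa using Finset.card_nsmul_le_sum T _ _ htranslate
      _ ≤ (F n).card := by exact_mod_cast sum_card_filter_mul_left_le (F n) B hT
  rw [le_div_iff₀ hα]
  nlinarith

theorem isSyndeticSet_mul_inv_of_upperDensity_pos (hF : IsFolnerNet F) {B : Set G}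
    (hB : 0 < upperDensity F B) : IsSyndeticSet (B * B⁻¹) := by
  obtain ⟨α, hα, hfreq⟩ := exists_pos_frequently_le_of_upperDensity_pos hB
  obtain ⟨b, hb⟩ := nonempty_of_upperDensity_pos hB
  have hne : ∀ a : G, ((a * ·) ⁻¹' B).Nonempty := fun a => ⟨a⁻¹ * b, by simpa using hb⟩
  obtain ⟨T, -, hT⟩ := exists_finset_pairwiseDisjoint_forall_inter_nonempty hne ⌈2 / α⌉₊
    fun T hT => by
      exact_mod_cast (card_le_of_pairwiseDisjoint_preimage_mul_left hF hα hfreq hT).trans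
        (Nat.le_ceil _)
  refine ⟨T, fun g => ?_⟩
  obtain ⟨j, hj, h, hgh, hjh⟩ := hT g⁻¹
  exact ⟨j, hj, j * h, hjh, (g⁻¹ * h)⁻¹, by simpa using hgh, by group⟩

end Folner

section Dynamics

variable {G : Type*} [Group G] {X : Type*} [MulAction G X]

theorem mul_inv_setOf_smul_mem_subset (x : X) (W : Set X) :
    {g : G | g • x ∈ W} * {g : G | g • x ∈ W}⁻¹ ⊆ {g : G | ∃ w ∈ W, g • w ∈ W} := by
  rintro _ ⟨a, ha, b, hb, rfl⟩
  exact ⟨b⁻¹ • x, hb, by simpa [smul_smul] using ha⟩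

theorem smul_setOf_exists_smul_mem_subset {U V W : Set X} (h : G) (hWU : W ⊆ U)
    (hWV : ∀ w ∈ W, h • w ∈ V) :
    h • {g : G | ∃ w ∈ W, g • w ∈ W} ⊆ {g : G | ∃ u ∈ U, g • u ∈ V} := by
  rintro _ ⟨g, ⟨w, hw, hgw⟩, rfl⟩
  exact ⟨w, hWU hw, by simpa [smul_smul] using hWV _ hgw⟩

end Dynamics

theorem topologicallyErgodic_of_minCenter_univ_general
    {G : Type*} [Group G] [DecidableEq G]
    {D : Type*} [Preorder D] [IsDirected D (· ≤ ·)] [Nonempty D]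
    {X : Type*} [MetricSpace X] [MulAction G X]
    (hcont : ∀ g : G, Continuous fun y : X => g • y)
    (Fol : D → Finset G) (hFol : IsFolnerNet Fol)
    (hX : ∃ x : X, minCenter Fol x = Set.univ) :
    ∀ U V : Set X, IsOpen U → IsOpen V → U.Nonempty → V.Nonempty →
      IsSyndeticSet {g : G | ∃ u ∈ U, g • u ∈ V} := by
  obtain ⟨x, hx⟩ := hX
  intro U V hU hV ⟨u, hu⟩ ⟨v, hv⟩
  have hcenter : ∀ W : Set X, IsOpen W → ∀ y ∈ W, 0 < upperDensity Fol {g : G | g • x ∈ W} :=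
    fun W hW y hy => (hx ▸ mem_univ y : y ∈ minCenter Fol x) W hW hy
  obtain ⟨g₁, hg₁⟩ := nonempty_of_upperDensity_pos (hcenter U hU u hu)
  obtain ⟨g₂, hg₂⟩ := nonempty_of_upperDensity_pos (hcenter V hV v hv)
  set h := g₂ * g₁⁻¹
  set W := U ∩ (h • ·) ⁻¹' V
  have hW : IsOpen W := hU.inter (hV.preimage (hcont h))
  have hg₁W : g₁ • x ∈ W := ⟨hg₁, by simpa [h, smul_smul] using hg₂⟩
  exact (((isSyndeticSet_mul_inv_of_upperDensity_pos hFol (hcenter W hW _ hg₁W)).mono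
    (mul_inv_setOf_smul_mem_subset x W)).smul_set h).mono
    (smul_setOf_exists_smul_mem_subset h inter_subset_left fun _ hw => hw.2)

/-- Lemma 3.6: if `C_F(x) = X` for some `x`, then `(G, X)` is topologically ergodic:
`N(U, V)` is syndetic for any nonempty open `U, V ⊆ X`. -/
theorem topologicallyErgodic_of_minCenter_univ
    {G : Type*} [Group G] [Infinite G] [DecidableEq G]
    {D : Type*} [Preorder D] [IsDirected D (· ≤ ·)] [Nonempty D]
    {X : Type*} [MetricSpace X] [CompactSpace X] [MulAction G X]
    (hcont : ∀ g : G, Continuous fun y : X => g • y)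
    (Fol : D → Finset G) (hFol : IsFolnerNet Fol)
    (hX : ∃ x : X, minCenter Fol x = Set.univ) :
    ∀ U V : Set X, IsOpen U → IsOpen V → U.Nonempty → V.Nonempty →
      IsSyndeticSet {g : G | ∃ u ∈ U, g • u ∈ V} :=
  topologicallyErgodic_of_minCenter_univ_general hcont Fol hFol hX
end
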